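/- For every string s ∈ Σ*, every nonterminal A of G, and every integer l ≥ 0: there exists a derivation A ⇒* s in the augmented grammar G_e of score at most l if and only if there exists a string s' ∈ Σ* with A ⇒* s' in G and d_ed(s, s') ≤ l. Consequently, the minimum score of any derivation A ⇒* s in G_e equals min{ d_ed(s, s') : A ⇒* s' in G }, and when A = S this minimum equals the language edit distance d_G(G,s). -/

import Mathlib

/-- A scored production of a grammar: a left-hand-side nonterminal, a right-hand-side
string of nonterminals and terminals, and a score (edit cost). -/
structure ScoredProd (N : Type*) (T : Type*) where
  lhs : N
  rhs : List (N ⊕ T)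
  score : ℕ

/-- `ScoredDerives P u v c` : from the sentential form `u` one can derive the sentential
form `v` using productions from `P` whose scores sum to `c`. -/
inductive ScoredDerives {N T : Type*} (P : Set (ScoredProd N T)) :
    List (N ⊕ T) → List (N ⊕ T) → ℕ → Prop
  | refl (w : List (N ⊕ T)) : ScoredDerives P w w 0
  | step {u l r : List (N ⊕ T)} {p : ScoredProd N T} {c : ℕ} :
      ScoredDerives P u (l ++ [Sum.inl p.lhs] ++ r) c → p ∈ P →
      ScoredDerives P u (l ++ p.rhs ++ r) (c + p.score)

/-- A context-free grammar in Chomsky normal form: binary rules `A → BC`,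
terminal rules `A → a`, and possibly the rule `S → ε` (recorded by `eps`). -/
structure CNF (N : Type*) (T : Type*) where
  start : N
  bin : Set (N × N × N)
  term : Set (N × T)
  eps : Prop

/-- The productions of the CNF grammar `G`, all of score `0`. -/
def CNF.prods {N T : Type*} (G : CNF N T) : Set (ScoredProd N T) :=
  {p | (∃ A B C, (A, B, C) ∈ G.bin ∧ p = ⟨A, [Sum.inl B, Sum.inl C], 0⟩) ∨
       (∃ A a, (A, a) ∈ G.term ∧ p = ⟨A, [Sum.inr a], 0⟩) ∨
       (G.eps ∧ p = ⟨G.start, [], 0⟩)}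

/-- Lift a production of `G` to the augmented grammar `G_e`, whose nonterminals are
`N ⊕ Unit` (with `Sum.inr ()` playing the role of the fresh nonterminal `I`). -/
def liftProd {N T : Type*} (p : ScoredProd N T) : ScoredProd (N ⊕ Unit) T :=
  ⟨Sum.inl p.lhs, p.rhs.map (Sum.map Sum.inl id), p.score⟩

/-- The productions of the augmented grammar `G_e`: the original productions of `G`
(score 0), elementary substitution rules `A → y` of score 1 (for `A` having some
terminal rule and `y` with `A → y ∉ P`), elementary insertion rules `I → x` of score 1,
rules `A → IA`, `A → AI` of score 0, `I → II` of score 0, and elementary deletion rules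
`A → ε` of score 1 for every terminal rule `A → x` of `G`. -/
def CNF.augProds {N T : Type*} (G : CNF N T) : Set (ScoredProd (N ⊕ Unit) T) :=
  (liftProd '' G.prods) ∪
  {p | ∃ A y, (∃ x, (A, x) ∈ G.term) ∧ (A, y) ∉ G.term ∧
        p = ⟨Sum.inl A, [Sum.inr y], 1⟩} ∪
  {p | ∃ x, p = ⟨Sum.inr (), [Sum.inr x], 1⟩} ∪
  {p | ∃ A : N, p = ⟨Sum.inl A, [Sum.inl (Sum.inr ()), Sum.inl (Sum.inl A)], 0⟩ ∨
                p = ⟨Sum.inl A, [Sum.inl (Sum.inl A), Sum.inl (Sum.inr ())], 0⟩} ∪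
  {(⟨Sum.inr (), [Sum.inl (Sum.inr ()), Sum.inl (Sum.inr ())], 0⟩ : ScoredProd (N ⊕ Unit) T)} ∪
  {p | ∃ A x, (A, x) ∈ G.term ∧ p = ⟨Sum.inl A, [], 1⟩}

/-- `A ⇒* s` in the grammar `G`. -/
def CNF.Derives {N T : Type*} (G : CNF N T) (A : N) (s : List T) : Prop :=
  ∃ u, ScoredDerives G.prods [Sum.inl A] (s.map Sum.inr) u

/-- The language of `G`. -/
def CNF.lang {N T : Type*} (G : CNF N T) : Set (List T) := {s | G.Derives G.start s}

/-- `A ⇒* s` in the augmented grammar `G_e` with a derivation of score exactly `u`. -/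
def CNF.augDerives {N T : Type*} (G : CNF N T) (A : N ⊕ Unit) (s : List T) (u : ℕ) : Prop :=
  ScoredDerives G.augProds [Sum.inl A] (s.map Sum.inr) u

/-- Cost structure for Levenshtein distance (removed from Mathlib; restored here). -/
structure Levenshtein.Cost (α β δ : Type*) where
  delete : α → δ
  insert : β → δ
  substitute : α → β → δ

/-- The default unit cost. -/
def Levenshtein.defaultCost {α : Type*} [DecidableEq α] : Levenshtein.Cost α α ℕ where
  delete _ := 1
  insert _ := 1
  substitute a b := if a = b then 0 else 1

/-- One row step of the Levenshtein dynamic program. -/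
def Levenshtein.impl {α β δ : Type*} [AddZeroClass δ] [Min δ] (C : Levenshtein.Cost α β δ)
    (xs : List α) (y : β) (d : {r : List δ // 0 < r.length}) :
    {r : List δ // 0 < r.length} :=
  let ⟨ds, w⟩ := d
  xs.zip (ds.zip ds.tail) |>.foldr
    (init := ⟨[ds.getLast (List.length_pos_iff.mp w) + C.insert y], by simp⟩)
    (fun ⟨x, d₀, d₁⟩ ⟨r, w⟩ =>
      ⟨min (C.delete x + r[0]) (min (C.insert y + d₀) (C.substitute x y + d₁)) :: r, by simp⟩)

/-- Levenshtein distances of all suffixes of `xs` to `ys`. -/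
def suffixLevenshtein {α β δ : Type*} [AddZeroClass δ] [Min δ] (C : Levenshtein.Cost α β δ)
    (xs : List α) (ys : List β) : {r : List δ // 0 < r.length} :=
  ys.foldr
    (Levenshtein.impl C xs)
    (xs.foldr (init := ⟨[0], by simp⟩) (fun a ⟨r, w⟩ => ⟨(C.delete a + r[0]) :: r, by simp⟩))

/-- The Levenshtein distance with cost `C`. -/
def levenshtein {α β δ : Type*} [AddZeroClass δ] [Min δ] (C : Levenshtein.Cost α β δ)
    (xs : List α) (ys : List β) : δ :=
  let ⟨r, w⟩ := suffixLevenshtein C xs ys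
  r[0]

/-- The standard (unit-cost) string edit distance. -/
def editDist {T : Type*} [DecidableEq T] (s t : List T) : ℕ :=
  levenshtein Levenshtein.defaultCost s t

/-- The language edit distance `d_G(G,s) = min_{z ∈ L(G)} d_ed(s,z)`. -/
noncomputable def dG {N T : Type*} [DecidableEq T] (G : CNF N T) (s : List T) : ℕ :=
  sInf {d | ∃ z ∈ G.lang, editDist s z = d}


/-!
A derivation in `G_e` is a parse tree of `G` whose leaves have been edited: a substitution
rule relabels a leaf `A → a`, a deletion rule erases it, and the subtrees rooted at the
insertion nonterminal `I` produce inserted letters at score one each. Erasing `I` and undoing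
the edits leaves a derivation `A ⇒* s'` in `G` together with an alignment of `s` with `s'`
costing at most the score. Conversely, an optimal alignment of `s` with `s'` splits along the
binary rules of a parse tree of `s'`, and the piece aligned with a leaf `A → a` is produced
from `A` by a lifted, substitution or deletion rule, plus insertion subtrees attached through
`A → IA` and `A → AI`. Both minima then agree because the two sets of scores have the same
sublevel sets.
-/

open Sum

namespace ScoredDerives

variable {N T : Type*} {P : Set (ScoredProd N T)}

theorem trans {u v w : List (N ⊕ T)} {c d : ℕ} (h₁ : ScoredDerives P u v c)
    (h₂ : ScoredDerives P v w d) : ScoredDerives P u w (c + d) := by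
  induction h₂ with
  | refl => exact h₁
  | step _ hp ih => rw [← Nat.add_assoc]; exact ih.step hp

theorem append_context {u v : List (N ⊕ T)} {c : ℕ} (h : ScoredDerives P u v c)
    (x y : List (N ⊕ T)) : ScoredDerives P (x ++ u ++ y) (x ++ v ++ y) c := by
  induction h with
  | refl => exact refl _
  | @step l r p c _ hp ih =>
    have ih' : ScoredDerives P (x ++ u ++ y) (x ++ l ++ [inl p.lhs] ++ (r ++ y)) c := by
      simpa using ih
    simpa using ih'.step hp

theorem append {u₁ v₁ u₂ v₂ : List (N ⊕ T)} {c₁ c₂ : ℕ} (h₁ : ScoredDerives P u₁ v₁ c₁)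
    (h₂ : ScoredDerives P u₂ v₂ c₂) : ScoredDerives P (u₁ ++ u₂) (v₁ ++ v₂) (c₁ + c₂) := by
  have h₁' : ScoredDerives P (u₁ ++ u₂) (v₁ ++ u₂) c₁ := by simpa using h₁.append_context [] u₂
  have h₂' : ScoredDerives P (v₁ ++ u₂) (v₁ ++ v₂) c₂ := by simpa using h₂.append_context v₁ []
  exact h₁'.trans h₂'

end ScoredDerives

/-- `ScoredYields P w s u`: a parse forest with one tree per symbol of `w`, leaves `s` and
total score `u`. -/
inductive ScoredYields {N T : Type*} (P : Set (ScoredProd N T)) :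
    List (N ⊕ T) → List T → ℕ → Prop
  | nil : ScoredYields P [] [] 0
  | cons_inr (a : T) {w : List (N ⊕ T)} {s : List T} {u : ℕ} :
      ScoredYields P w s u → ScoredYields P (inr a :: w) (a :: s) u
  | cons_inl {p : ScoredProd N T} (hp : p ∈ P) {w : List (N ⊕ T)} {s₁ s₂ : List T}
      {u₁ u₂ : ℕ} : ScoredYields P p.rhs s₁ u₁ → ScoredYields P w s₂ u₂ →
      ScoredYields P (inl p.lhs :: w) (s₁ ++ s₂) (u₁ + p.score + u₂)

namespace ScoredYields

variable {N T : Type*} {P : Set (ScoredProd N T)}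

theorem eq_nil {s : List T} {u : ℕ} (h : ScoredYields P [] s u) : s = [] ∧ u = 0 := by
  cases h; exact ⟨rfl, rfl⟩

theorem singleton_inr {a : T} {s : List T} {u : ℕ} (h : ScoredYields P [inr a] s u) :
    s = [a] ∧ u = 0 := by
  cases h with
  | cons_inr a h => obtain ⟨rfl, rfl⟩ := h.eq_nil; exact ⟨rfl, rfl⟩

theorem singleton {p : ScoredProd N T} (hp : p ∈ P) {s : List T} {u : ℕ}
    (h : ScoredYields P p.rhs s u) : ScoredYields P [inl p.lhs] s (u + p.score) := by
  simpa using cons_inl hp h nil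

theorem map_inr (s : List T) : ScoredYields P (s.map inr) s 0 := by
  induction s with
  | nil => exact nil
  | cons a s ih => exact ih.cons_inr a

theorem append {w₁ w₂ : List (N ⊕ T)} {s₁ s₂ : List T} {u₁ u₂ : ℕ}
    (h₁ : ScoredYields P w₁ s₁ u₁) (h₂ : ScoredYields P w₂ s₂ u₂) :
    ScoredYields P (w₁ ++ w₂) (s₁ ++ s₂) (u₁ + u₂) := by
  induction h₁ with
  | nil => simpa using h₂
  | cons_inr a _ ih => simpa using ih.cons_inr a
  | cons_inl hp hr _ _ ih =>
    rw [List.cons_append, List.append_assoc, Nat.add_assoc]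
    exact cons_inl hp hr ih

theorem exists_of_append {w₁ w₂ : List (N ⊕ T)} {s : List T} {u : ℕ}
    (h : ScoredYields P (w₁ ++ w₂) s u) : ∃ s₁ s₂ u₁ u₂, s = s₁ ++ s₂ ∧ u = u₁ + u₂ ∧
      ScoredYields P w₁ s₁ u₁ ∧ ScoredYields P w₂ s₂ u₂ := by
  induction w₁ generalizing s u with
  | nil => exact ⟨[], s, 0, u, rfl, by omega, nil, h⟩
  | cons x w₁ ih =>
    cases h with
    | cons_inr a h =>
      obtain ⟨s₁, s₂, u₁, u₂, rfl, rfl, h₁, h₂⟩ := ih h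
      exact ⟨a :: s₁, s₂, u₁, u₂, rfl, rfl, h₁.cons_inr a, h₂⟩
    | cons_inl hp hr h =>
      obtain ⟨s₁, s₂, u₁, u₂, rfl, rfl, h₁, h₂⟩ := ih h
      exact ⟨_, s₂, _, u₂, (List.append_assoc _ _ _).symm, by omega, cons_inl hp hr h₁, h₂⟩

theorem of_step {p : ScoredProd N T} (hp : p ∈ P) {l r : List (N ⊕ T)} {s : List T} {u : ℕ}
    (h : ScoredYields P (l ++ p.rhs ++ r) s u) :
    ScoredYields P (l ++ [inl p.lhs] ++ r) s (u + p.score) := by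
  obtain ⟨s₁₂, s₃, u₁₂, u₃, rfl, rfl, h₁₂, h₃⟩ := exists_of_append h
  obtain ⟨s₁, s₂, u₁, u₂, rfl, rfl, h₁, h₂⟩ := exists_of_append h₁₂
  convert (h₁.append (h₂.singleton hp)).append h₃ using 1
  omega

theorem scoredDerives {w : List (N ⊕ T)} {s : List T} {u : ℕ} (h : ScoredYields P w s u) :
    ScoredDerives P w (s.map inr) u := by
  induction h with
  | nil => exact .refl []
  | cons_inr a _ ih => simpa using ih.append_context [inr a] []
  | @cons_inl p hp w s₁ s₂ u₁ u₂ _ _ ih₁ ih₂ =>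
    have expand : ScoredDerives P (inl p.lhs :: w) (p.rhs ++ w) p.score := by
      simpa using ScoredDerives.step (l := []) (r := w) (.refl _) hp
    convert expand.trans (ih₁.append ih₂) using 1
    · simp
    · omega

end ScoredYields

theorem ScoredDerives.scoredYields {N T : Type*} {P : Set (ScoredProd N T)}
    {w v : List (N ⊕ T)} {c : ℕ} (h : ScoredDerives P w v c) {s : List T} {u : ℕ}
    (hv : ScoredYields P v s u) : ScoredYields P w s (c + u) := by
  induction h generalizing u with
  | refl => simpa using hv
  | step _ hp ih => convert ih (hv.of_step hp) using 1; omega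

theorem scoredDerives_iff_scoredYields {N T : Type*} {P : Set (ScoredProd N T)}
    {w : List (N ⊕ T)} {s : List T} {c : ℕ} :
    ScoredDerives P w (s.map inr) c ↔ ScoredYields P w s c :=
  ⟨fun h => h.scoredYields (.map_inr s), ScoredYields.scoredDerives⟩

theorem List.eq_getElem_zero_cons {γ : Type*} {l t : List γ} {a : γ} (h : l = a :: t) :
    l = l[0]'(by simp [h]) :: t := by
  subst h; rfl

section LevenshteinRecurrence

variable {α β δ : Type*} [AddZeroClass δ] [Min δ] (C : Levenshtein.Cost α β δ)

-- `(suffixLevenshtein C xs ys).1` lists `levenshtein C xs' ys` over the suffixes `xs'` of `xs`;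
-- the `_of_eq` lemmas compute one step of the fold over `ys` from that shape.

theorem levenshteinImpl_cons (x : α) (xs : List α) (y : β) (d : δ) (ds : List δ)
    (hds : 0 < ds.length) :
    (Levenshtein.impl C (x :: xs) y ⟨d :: ds, by simp⟩).1 =
      min (C.delete x + (Levenshtein.impl C xs y ⟨ds, hds⟩).1[0]'(Levenshtein.impl C xs y _).2)
        (min (C.insert y + d) (C.substitute x y + ds[0])) ::
      (Levenshtein.impl C xs y ⟨ds, hds⟩).1 := by
  obtain ⟨d', ds, rfl⟩ := List.exists_cons_of_length_pos hds
  rfl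

theorem suffixLevenshtein_nil_cons_of_eq (y : β) {ys : List β}
    (h : (suffixLevenshtein C [] ys).1 = [levenshtein C [] ys]) :
    (suffixLevenshtein C [] (y :: ys)).1 = [levenshtein C [] ys + C.insert y] := by
  change (Levenshtein.impl C [] y (suffixLevenshtein C [] ys)).1 = _
  rw [show suffixLevenshtein C [] ys = ⟨_, by simp⟩ from Subtype.ext h]
  rfl

theorem suffixLevenshtein_nil_left (ys : List β) :
    (suffixLevenshtein C [] ys).1 = [levenshtein C [] ys] := by
  induction ys with
  | nil => rfl
  | cons y ys ih => exact List.eq_getElem_zero_cons (suffixLevenshtein_nil_cons_of_eq C y ih)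

theorem suffixLevenshtein_cons_cons_of_eq (x : α) (xs : List α) (y : β) {ys : List β}
    (h : (suffixLevenshtein C (x :: xs) ys).1 =
      levenshtein C (x :: xs) ys :: (suffixLevenshtein C xs ys).1) :
    (suffixLevenshtein C (x :: xs) (y :: ys)).1 =
      min (C.delete x + levenshtein C xs (y :: ys))
        (min (C.insert y + levenshtein C (x :: xs) ys)
          (C.substitute x y + levenshtein C xs ys)) ::
      (suffixLevenshtein C xs (y :: ys)).1 := by
  change (Levenshtein.impl C (x :: xs) y (suffixLevenshtein C (x :: xs) ys)).1 = _
  rw [show suffixLevenshtein C (x :: xs) ys = ⟨_, by simp⟩ from Subtype.ext h,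
    levenshteinImpl_cons C x xs y _ _ (suffixLevenshtein C xs ys).2]
  rfl

theorem suffixLevenshtein_cons_left (x : α) (xs : List α) (ys : List β) :
    (suffixLevenshtein C (x :: xs) ys).1 =
      levenshtein C (x :: xs) ys :: (suffixLevenshtein C xs ys).1 := by
  induction ys with
  | nil => rfl
  | cons y ys ih =>
    exact List.eq_getElem_zero_cons (suffixLevenshtein_cons_cons_of_eq C x xs y ih)

theorem levenshtein_nil_cons (y : β) (ys : List β) :
    levenshtein C [] (y :: ys) = levenshtein C [] ys + C.insert y :=
  List.getElem_of_eq (suffixLevenshtein_nil_cons_of_eq C y (suffixLevenshtein_nil_left C ys)) _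

theorem levenshtein_cons_cons (x : α) (xs : List α) (y : β) (ys : List β) :
    levenshtein C (x :: xs) (y :: ys) =
      min (C.delete x + levenshtein C xs (y :: ys))
        (min (C.insert y + levenshtein C (x :: xs) ys)
          (C.substitute x y + levenshtein C xs ys)) :=
  List.getElem_of_eq
    (suffixLevenshtein_cons_cons_of_eq C x xs y (suffixLevenshtein_cons_left C x xs ys)) _

end LevenshteinRecurrence

section EditDistance

variable {T : Type*} [DecidableEq T]

theorem editDist_cons_nil (a : T) (s : List T) : editDist (a :: s) [] = 1 + editDist s [] :=
  rfl

theorem editDist_nil_cons (b : T) (t : List T) : editDist [] (b :: t) = editDist [] t + 1 :=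
  levenshtein_nil_cons _ b t

theorem editDist_cons_cons (a b : T) (s t : List T) :
    editDist (a :: s) (b :: t) =
      min (1 + editDist s (b :: t))
        (min (1 + editDist (a :: s) t) ((if a = b then 0 else 1) + editDist s t)) :=
  levenshtein_cons_cons _ a s b t

end EditDistance

/-- `EditScript s t n`: `s` is turned into `t` by an alignment using `n` unit-cost edits. -/
inductive EditScript {T : Type*} : List T → List T → ℕ → Prop
  | nil : EditScript [] [] 0
  | keep (a : T) {s t : List T} {n : ℕ} : EditScript s t n → EditScript (a :: s) (a :: t) n
  | substitute (a b : T) {s t : List T} {n : ℕ} :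
      EditScript s t n → EditScript (a :: s) (b :: t) (n + 1)
  | delete (a : T) {s t : List T} {n : ℕ} : EditScript s t n → EditScript (a :: s) t (n + 1)
  | insert (b : T) {s t : List T} {n : ℕ} : EditScript s t n → EditScript s (b :: t) (n + 1)

namespace EditScript

variable {T : Type*}

theorem append {s₁ t₁ s₂ t₂ : List T} {n₁ n₂ : ℕ} (h₁ : EditScript s₁ t₁ n₁)
    (h₂ : EditScript s₂ t₂ n₂) : EditScript (s₁ ++ s₂) (t₁ ++ t₂) (n₁ + n₂) := by
  induction h₁ with
  | nil => simpa using h₂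
  | keep a _ ih => exact ih.keep a
  | substitute a b _ ih => rw [Nat.add_right_comm]; exact ih.substitute a b
  | delete a _ ih => rw [Nat.add_right_comm]; exact ih.delete a
  | insert b _ ih => rw [Nat.add_right_comm]; exact ih.insert b

theorem eq_length_of_nil_right {s : List T} {n : ℕ} (h : EditScript s [] n) : n = s.length := by
  generalize ht : ([] : List T) = t at h
  induction h with
  | nil => rfl
  | delete a _ ih => simp [ih ht]
  | keep | substitute | insert => simp at ht

theorem exists_split_right {s t₁ t₂ : List T} {n : ℕ} (h : EditScript s (t₁ ++ t₂) n) :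
    ∃ s₁ s₂ n₁ n₂, s = s₁ ++ s₂ ∧ n = n₁ + n₂ ∧ EditScript s₁ t₁ n₁ ∧ EditScript s₂ t₂ n₂ := by
  generalize ht : t₁ ++ t₂ = t at h
  induction h generalizing t₁ with
  | nil =>
    obtain ⟨rfl, rfl⟩ := List.append_eq_nil_iff.mp ht
    exact ⟨[], [], 0, 0, rfl, rfl, nil, nil⟩
  | @keep a s t n h ih =>
    rcases List.cons_eq_append_iff.mp ht.symm with ⟨rfl, rfl⟩ | ⟨t₁, rfl, rfl⟩
    · exact ⟨[], _, 0, _, rfl, by omega, nil, h.keep a⟩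
    · obtain ⟨s₁, s₂, n₁, n₂, rfl, rfl, h₁, h₂⟩ := ih rfl
      exact ⟨a :: s₁, s₂, n₁, n₂, rfl, rfl, h₁.keep a, h₂⟩
  | @substitute a b s t n h ih =>
    rcases List.cons_eq_append_iff.mp ht.symm with ⟨rfl, rfl⟩ | ⟨t₁, rfl, rfl⟩
    · exact ⟨[], _, 0, _, rfl, by omega, nil, h.substitute a b⟩
    · obtain ⟨s₁, s₂, n₁, n₂, rfl, rfl, h₁, h₂⟩ := ih rfl
      exact ⟨a :: s₁, s₂, n₁ + 1, n₂, rfl, by omega, h₁.substitute a b, h₂⟩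
  | @delete a s t n h ih =>
    obtain ⟨s₁, s₂, n₁, n₂, rfl, rfl, h₁, h₂⟩ := ih ht
    exact ⟨a :: s₁, s₂, n₁ + 1, n₂, rfl, by omega, h₁.delete a, h₂⟩
  | @insert b s t n h ih =>
    rcases List.cons_eq_append_iff.mp ht.symm with ⟨rfl, rfl⟩ | ⟨t₁, rfl, rfl⟩
    · exact ⟨[], _, 0, _, rfl, by omega, nil, h.insert b⟩
    · obtain ⟨s₁, s₂, n₁, n₂, rfl, rfl, h₁, h₂⟩ := ih rfl
      exact ⟨s₁, s₂, n₁ + 1, n₂, rfl, by omega, h₁.insert b, h₂⟩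

variable [DecidableEq T]

theorem editDist_le {s t : List T} {n : ℕ} (h : EditScript s t n) : editDist s t ≤ n := by
  induction h with
  | nil => rfl
  | @keep a s t n _ ih => rw [editDist_cons_cons]; simp [ih]
  | @substitute a b s t n _ ih =>
    rw [editDist_cons_cons]
    refine min_le_of_right_le (min_le_of_right_le ?_)
    split_ifs <;> omega
  | @delete a s t n _ ih =>
    cases t with
    | nil => rw [editDist_cons_nil]; omega
    | cons b t => rw [editDist_cons_cons]; exact min_le_of_left_le (by omega)
  | @insert b s t n _ ih =>
    cases s with
    | nil => rw [editDist_nil_cons]; omega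
    | cons a s => rw [editDist_cons_cons]; exact min_le_of_right_le (min_le_of_left_le (by omega))

theorem of_editDist : ∀ s t : List T, EditScript s t (editDist s t)
  | [], [] => nil
  | a :: s, [] => by rw [editDist_cons_nil, Nat.add_comm]; exact (of_editDist s []).delete a
  | [], b :: t => by rw [editDist_nil_cons]; exact (of_editDist [] t).insert b
  | a :: s, b :: t => by
    rw [editDist_cons_cons]
    rcases min_choice (1 + editDist s (b :: t))
      (min (1 + editDist (a :: s) t) ((if a = b then 0 else 1) + editDist s t)) with h | h <;>
      rw [h]
    · rw [Nat.add_comm]; exact (of_editDist s (b :: t)).delete a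
    · rcases min_choice (1 + editDist (a :: s) t) ((if a = b then 0 else 1) + editDist s t)
        with h' | h' <;> rw [h']
      · rw [Nat.add_comm]; exact (of_editDist (a :: s) t).insert b
      · split_ifs with hab
        · subst hab; simpa using (of_editDist s t).keep a
        · rw [Nat.add_comm]; exact (of_editDist s t).substitute a b

end EditScript

namespace CNF

variable {N T : Type*} {G : CNF N T}

inductive Generates (G : CNF N T) : N → List T → Prop
  | bin {A B C : N} {t₁ t₂ : List T} : (A, B, C) ∈ G.bin → G.Generates B t₁ →
      G.Generates C t₂ → G.Generates A (t₁ ++ t₂)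
  | term {A : N} {a : T} : (A, a) ∈ G.term → G.Generates A [a]
  | eps : G.eps → G.Generates G.start []

theorem forall₂_generates_of_scoredYields {w : List (N ⊕ T)} {t : List T} {c : ℕ}
    (h : ScoredYields G.prods w t c) :
    ∀ As : List N, w = As.map inl → ∃ ts, t = ts.flatten ∧ List.Forall₂ G.Generates As ts := by
  induction h with
  | nil => rintro (_ | _) h <;> simp_all
  | cons_inr a _ _ => rintro (_ | _) h <;> simp_all
  | @cons_inl p hp w t₁ t₂ c₁ c₂ h₁ _ ih₁ ih₂ =>
    rintro (_ | ⟨A, As⟩) hw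
    · simp at hw
    obtain ⟨rfl, rfl⟩ : p.lhs = A ∧ w = As.map inl := by simpa using hw
    obtain ⟨ts, rfl, hts⟩ := ih₂ As rfl
    refine ⟨t₁ :: ts, rfl, List.Forall₂.cons ?_ hts⟩
    rcases hp with ⟨A, B, C, hABC, rfl⟩ | ⟨A, a, ha, rfl⟩ | ⟨hε, rfl⟩
    · obtain ⟨_, rfl, hts⟩ := ih₁ [B, C] rfl
      simp only [List.forall₂_cons_left_iff, List.forall₂_nil_left_iff] at hts
      obtain ⟨u₁, _, hB, ⟨u₂, _, hC, rfl, rfl⟩, rfl⟩ := hts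
      simpa using Generates.bin hABC hB hC
    · obtain ⟨rfl, -⟩ := h₁.singleton_inr
      exact .term ha
    · obtain ⟨rfl, -⟩ := h₁.eq_nil
      exact .eps hε

theorem Generates.of_scoredYields {A : N} {t : List T} {c : ℕ}
    (h : ScoredYields G.prods [inl A] t c) : G.Generates A t := by
  obtain ⟨ts, rfl, hts⟩ := forall₂_generates_of_scoredYields h [A] rfl
  simp only [List.forall₂_cons_left_iff, List.forall₂_nil_left_iff] at hts
  obtain ⟨t, _, hA, rfl, rfl⟩ := hts
  simpa using hA

theorem liftProd_mem_augProds {p : ScoredProd N T} (hp : p ∈ G.prods) :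
    liftProd p ∈ G.augProds := by
  simp [augProds, Set.mem_image_of_mem _ hp]

theorem term_mem_prods {A : N} {a : T} (ha : (A, a) ∈ G.term) :
    (⟨A, [inr a], 0⟩ : ScoredProd N T) ∈ G.prods :=
  .inr (.inl ⟨A, a, ha, rfl⟩)

theorem augYields_of_bin {A B C : N} (h : (A, B, C) ∈ G.bin) {s : List T} {u : ℕ}
    (hBC : ScoredYields G.augProds [inl (inl B), inl (inl C)] s u) :
    ScoredYields G.augProds [inl (inl A)] s u :=
  hBC.singleton (liftProd_mem_augProds (p := ⟨A, [inl B, inl C], 0⟩) (.inl ⟨A, B, C, h, rfl⟩))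

theorem augYields_of_term {A : N} {a : T} (ha : (A, a) ∈ G.term) :
    ScoredYields G.augProds [inl (inl A)] [a] 0 :=
  (ScoredYields.nil.cons_inr a).singleton (liftProd_mem_augProds (term_mem_prods ha))

theorem augYields_of_eps (hε : G.eps) : ScoredYields G.augProds [inl (inl G.start)] [] 0 :=
  ScoredYields.nil.singleton (liftProd_mem_augProds (p := ⟨G.start, [], 0⟩) (.inr (.inr ⟨hε, rfl⟩)))

theorem exists_augYields_letter_le_one {A : N} {a : T} (ha : (A, a) ∈ G.term) (b : T) :
    ∃ u ≤ 1, ScoredYields G.augProds [inl (inl A)] [b] u := by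
  by_cases hb : (A, b) ∈ G.term
  · exact ⟨0, zero_le_one, augYields_of_term hb⟩
  · refine ⟨1, le_rfl, (ScoredYields.nil.cons_inr b).singleton (p := ⟨inl A, [inr b], 1⟩) ?_⟩
    simp [augProds, hb]
    exact .inr ⟨a, ha⟩

theorem augYields_nil_of_term {A : N} {a : T} (ha : (A, a) ∈ G.term) :
    ScoredYields G.augProds [inl (inl A)] [] 1 :=
  ScoredYields.nil.singleton (p := ⟨inl A, [], 1⟩) (.inr ⟨A, a, ha, rfl⟩)

theorem augYields_insertion_singleton (a : T) : ScoredYields G.augProds [inl (inr ())] [a] 1 :=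
  (ScoredYields.nil.cons_inr a).singleton (p := ⟨inr (), [inr a], 1⟩) (by simp [augProds])

theorem augYields_insertion {s : List T} (hs : s ≠ []) :
    ScoredYields G.augProds [inl (inr ())] s s.length := by
  induction s with
  | nil => contradiction
  | cons a s ih =>
    rcases eq_or_ne s [] with rfl | hs
    · exact augYields_insertion_singleton a
    · convert ((augYields_insertion_singleton a).append (ih hs)).singleton
        (p := ⟨inr (), [inl (inr ()), inl (inr ())], 0⟩) (by simp [augProds]) using 1 <;>
        simp; omega

theorem augYields_append_insertions {A : N} {s : List T} {u : ℕ}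
    (h : ScoredYields G.augProds [inl (inl A)] s u) (t : List T) :
    ScoredYields G.augProds [inl (inl A)] (s ++ t) (u + t.length) := by
  rcases eq_or_ne t [] with rfl | ht
  · simpa using h
  · exact (h.append (augYields_insertion ht)).singleton
      (p := ⟨inl A, [inl (inl A), inl (inr ())], 0⟩) (by simp [augProds])

theorem augYields_cons_insertion {A : N} {s : List T} {u : ℕ}
    (h : ScoredYields G.augProds [inl (inl A)] s u) (b : T) :
    ScoredYields G.augProds [inl (inl A)] (b :: s) (u + 1) := by
  convert ((augYields_insertion_singleton b).append h).singleton
      (p := ⟨inl A, [inl (inr ()), inl (inl A)], 0⟩) (by simp [augProds]) using 1 <;>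
    simp; omega

theorem exists_augYields_le_of_editScript_singleton {A : N} {a : T} (ha : (A, a) ∈ G.term)
    {s : List T} {n : ℕ} (h : EditScript s [a] n) :
    ∃ u ≤ n, ScoredYields G.augProds [inl (inl A)] s u := by
  generalize ht : [a] = t at h
  induction h with
  | nil => simp at ht
  | keep b h =>
    obtain ⟨rfl, rfl⟩ := List.cons_eq_cons.mp ht
    exact ⟨_, by simp [h.eq_length_of_nil_right],
      augYields_append_insertions (augYields_of_term ha) _⟩
  | substitute b c h =>
    obtain ⟨rfl, rfl⟩ := List.cons_eq_cons.mp ht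
    obtain ⟨u, hu, hb⟩ := exists_augYields_letter_le_one ha b
    exact ⟨_, by simp [h.eq_length_of_nil_right]; omega, augYields_append_insertions hb _⟩
  | delete b _ ih =>
    obtain ⟨u, hu, hs⟩ := ih ht
    exact ⟨u + 1, by omega, augYields_cons_insertion hs b⟩
  | insert b h =>
    obtain ⟨rfl, rfl⟩ := List.cons_eq_cons.mp ht
    exact ⟨_, by simp [h.eq_length_of_nil_right]; omega,
      augYields_append_insertions (augYields_nil_of_term ha) _⟩

theorem Generates.exists_augYields_le {A : N} {t : List T} (hA : G.Generates A t) {s : List T}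
    {n : ℕ} (h : EditScript s t n) : ∃ u ≤ n, ScoredYields G.augProds [inl (inl A)] s u := by
  induction hA generalizing s n with
  | bin hABC _ _ ih₁ ih₂ =>
    obtain ⟨s₁, s₂, n₁, n₂, rfl, rfl, h₁, h₂⟩ := h.exists_split_right
    obtain ⟨u₁, hu₁, y₁⟩ := ih₁ h₁
    obtain ⟨u₂, hu₂, y₂⟩ := ih₂ h₂
    exact ⟨u₁ + u₂, by omega, augYields_of_bin hABC (y₁.append y₂)⟩
  | term ha => exact exists_augYields_le_of_editScript_singleton ha h
  | eps hε =>
    exact ⟨s.length, h.eq_length_of_nil_right.ge, by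
      simpa using augYields_append_insertions (augYields_of_eps hε) s⟩

def unliftSymbol : (N ⊕ Unit) ⊕ T → List (N ⊕ T)
  | inl (inl A) => [inl A]
  | inl (inr ()) => []
  | inr a => [inr a]

def unlift (w : List ((N ⊕ Unit) ⊕ T)) : List (N ⊕ T) :=
  w.flatMap unliftSymbol

theorem unlift_cons (x : (N ⊕ Unit) ⊕ T) (w : List ((N ⊕ Unit) ⊕ T)) :
    unlift (x :: w) = unliftSymbol x ++ unlift w :=
  List.flatMap_cons

theorem unlift_liftProd_rhs (p : ScoredProd N T) : unlift (liftProd p).rhs = p.rhs := by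
  simp only [liftProd]
  induction p.rhs with
  | nil => rfl
  | cons x w ih => cases x <;> simp [unlift_cons, unliftSymbol, ih]

def YieldsWithin (G : CNF N T) (w : List (N ⊕ T)) (s : List T) (u : ℕ) : Prop :=
  ∃ t c n, ScoredYields G.prods w t c ∧ EditScript s t n ∧ n ≤ u

theorem YieldsWithin.mono {w : List (N ⊕ T)} {s : List T} {u u' : ℕ}
    (h : G.YieldsWithin w s u) (hu : u ≤ u') : G.YieldsWithin w s u' :=
  let ⟨t, c, n, ht, hst, hn⟩ := h
  ⟨t, c, n, ht, hst, hn.trans hu⟩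

theorem YieldsWithin.append {w₁ w₂ : List (N ⊕ T)} {s₁ s₂ : List T} {u₁ u₂ : ℕ}
    (h₁ : G.YieldsWithin w₁ s₁ u₁) (h₂ : G.YieldsWithin w₂ s₂ u₂) :
    G.YieldsWithin (w₁ ++ w₂) (s₁ ++ s₂) (u₁ + u₂) :=
  let ⟨t₁, c₁, n₁, ht₁, hst₁, hn₁⟩ := h₁
  let ⟨t₂, c₂, n₂, ht₂, hst₂, hn₂⟩ := h₂
  ⟨t₁ ++ t₂, c₁ + c₂, n₁ + n₂, ht₁.append ht₂, hst₁.append hst₂, by omega⟩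

theorem yieldsWithin_of_term {A : N} {a : T} (ha : (A, a) ∈ G.term) {s : List T}
    (h : EditScript s [a] 1) : G.YieldsWithin [inl A] s 1 :=
  ⟨[a], 0, 1, (ScoredYields.nil.cons_inr a).singleton (term_mem_prods ha), h, le_rfl⟩

theorem YieldsWithin.of_augProds {p : ScoredProd (N ⊕ Unit) T} (hp : p ∈ G.augProds)
    {s : List T} {u : ℕ} (hs : ScoredYields G.augProds p.rhs s u)
    (h : G.YieldsWithin (unlift p.rhs) s u) :
    G.YieldsWithin (unlift [inl p.lhs]) s (u + p.score) := by
  simp only [augProds, Set.mem_union, Set.mem_image, Set.mem_ofPred_eq,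
    Set.mem_singleton_iff] at hp
  rcases hp with ((((⟨q, hq, rfl⟩ | ⟨A, y, ⟨x, hx⟩, -, rfl⟩) | ⟨x, rfl⟩) | ⟨A, rfl | rfl⟩) | rfl) |
    ⟨A, x, hx, rfl⟩
  · obtain ⟨t, c, n, ht, hst, hn⟩ := h
    rw [unlift_liftProd_rhs] at ht
    exact ⟨t, c + q.score, n, by simpa [unlift, unliftSymbol, liftProd] using ht.singleton hq,
      hst, by simp only [liftProd]; omega⟩
  · obtain ⟨rfl, rfl⟩ := hs.singleton_inr
    exact yieldsWithin_of_term hx (.substitute y x .nil)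
  · obtain ⟨rfl, rfl⟩ := hs.singleton_inr
    exact ⟨[], 0, 1, .nil, .delete x .nil, le_rfl⟩
  · exact h.mono (by omega)
  · exact h.mono (by omega)
  · exact h.mono (by omega)
  · obtain ⟨rfl, rfl⟩ := hs.eq_nil
    exact yieldsWithin_of_term hx (.insert x .nil)

theorem yieldsWithin_of_augYields {w : List ((N ⊕ Unit) ⊕ T)} {s : List T} {u : ℕ}
    (h : ScoredYields G.augProds w s u) : G.YieldsWithin (unlift w) s u := by
  induction h with
  | nil => exact ⟨[], 0, 0, .nil, .nil, le_rfl⟩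
  | cons_inr a _ ih =>
    obtain ⟨t, c, n, ht, hst, hn⟩ := ih
    exact ⟨a :: t, c, n, ht.cons_inr a, hst.keep a, hn⟩
  | cons_inl hp h₁ _ ih₁ ih₂ =>
    rw [unlift_cons]
    simpa [unlift] using (ih₁.of_augProds hp h₁).append ih₂

end CNF

theorem Nat.sInf_eq_of_forall_exists_le_iff {U D : Set ℕ}
    (h : ∀ l, (∃ u ≤ l, u ∈ U) ↔ ∃ d ≤ l, d ∈ D) : sInf U = sInf D := by
  rcases U.eq_empty_or_nonempty with hU | hU
  · have hD : D = ∅ := Set.eq_empty_of_forall_notMem fun d hd => by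
      obtain ⟨u, -, hu⟩ := (h d).2 ⟨d, le_rfl, hd⟩
      simp [hU] at hu
    rw [hU, hD]
  · obtain ⟨d, -, hd⟩ := (h _).1 ⟨_, le_rfl, hU.some_mem⟩
    apply le_antisymm
    · obtain ⟨u, hle, hu⟩ := (h _).2 ⟨_, le_rfl, Nat.sInf_mem ⟨d, hd⟩⟩
      exact (Nat.sInf_le hu).trans hle
    · obtain ⟨d, hle, hd⟩ := (h _).1 ⟨_, le_rfl, Nat.sInf_mem hU⟩
      exact (Nat.sInf_le hd).trans hle

theorem CNF.exists_augDerives_le_iff {N T : Type*} [DecidableEq T] (G : CNF N T) (s : List T)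
    (A : N) (l : ℕ) :
    (∃ u ≤ l, G.augDerives (inl A) s u) ↔ ∃ s', G.Derives A s' ∧ editDist s s' ≤ l := by
  constructor
  · rintro ⟨u, hul, hu⟩
    obtain ⟨t, c, n, ht, hst, hn⟩ :=
      yieldsWithin_of_augYields (scoredDerives_iff_scoredYields.mp hu)
    exact ⟨t, ⟨c, ht.scoredDerives⟩, hst.editDist_le.trans (hn.trans hul)⟩
  · rintro ⟨t, ⟨c, ht⟩, hl⟩
    have hA : G.Generates A t := .of_scoredYields (scoredDerives_iff_scoredYields.mp ht)
    obtain ⟨u, hu, hs⟩ := hA.exists_augYields_le (EditScript.of_editDist s t)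
    exact ⟨u, hu.trans hl, hs.scoredDerives⟩

theorem augGrammar_score_iff_editDist_general {N T : Type*} [DecidableEq T]
    (G : CNF N T) (s : List T) (A : N) :
    (∀ l : ℕ, (∃ u ≤ l, G.augDerives (Sum.inl A) s u) ↔
        ∃ s', G.Derives A s' ∧ editDist s s' ≤ l) ∧
    sInf {u | G.augDerives (Sum.inl A) s u} =
      sInf {d | ∃ s', G.Derives A s' ∧ editDist s s' = d} ∧
    (A = G.start → sInf {u | G.augDerives (Sum.inl A) s u} = dG G s) := by
  have hmin : sInf {u | G.augDerives (Sum.inl A) s u} =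
      sInf {d | ∃ s', G.Derives A s' ∧ editDist s s' = d} :=
    Nat.sInf_eq_of_forall_exists_le_iff fun l => (G.exists_augDerives_le_iff s A l).trans
      ⟨fun ⟨t, ht, hl⟩ => ⟨_, hl, t, ht, rfl⟩, fun ⟨_, hl, t, ht, hd⟩ => ⟨t, ht, hd ▸ hl⟩⟩
  refine ⟨G.exists_augDerives_le_iff s A, hmin, ?_⟩
  rintro rfl
  exact hmin

/-- For every string `s ∈ Σ*`, every nonterminal `A` of `G`, and every
`l ≥ 0`: there is a derivation `A ⇒* s` in `G_e` of score at most `l` iff there is a string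
`s'` with `A ⇒* s'` in `G` and `d_ed(s, s') ≤ l`. Consequently, the minimum score of any
derivation `A ⇒* s` in `G_e` equals `min { d_ed(s, s') : A ⇒* s' in G }`, and when `A = S`
this minimum equals the language edit distance `d_G(G,s)`. -/
theorem augGrammar_score_iff_editDist {N T : Type*} [DecidableEq T]
    (G : CNF N T) (hne : G.lang.Nonempty) (s : List T) (A : N) :
    (∀ l : ℕ, (∃ u ≤ l, G.augDerives (Sum.inl A) s u) ↔
        ∃ s', G.Derives A s' ∧ editDist s s' ≤ l) ∧
    sInf {u | G.augDerives (Sum.inl A) s u} =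
      sInf {d | ∃ s', G.Derives A s' ∧ editDist s s' = d} ∧
    (A = G.start → sInf {u | G.augDerives (Sum.inl A) s u} = dG G s) :=
  augGrammar_score_iff_editDist_general G s A
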